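/- Let a ∈ ℝ^{md}. There exists a constant C' > 0, depending only on a and T_1,…,T_m, such that for every nonempty compact set E ⊆ Σ and every r with 0 < r < α_+, N_r(π^a(E)) ≤ ( log r / log α_+ + 2 ) · C' · C_r(E), where α_+ = max_{1≤i≤m} ‖T_i‖. -/

import Mathlib

open MeasureTheory Filter Topology Metric
open scoped ENNReal NNReal

noncomputable section

namespace SelfAffineProj

/-- The word product `T_{x|n} = T_{x_1} ⋯ T_{x_n}`. -/
def wordProd {m d : ℕ} (T : Fin m → Matrix (Fin d) (Fin d) ℝ) (x : ℕ → Fin m) (n : ℕ) :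
    Matrix (Fin d) (Fin d) ℝ :=
  ((List.range n).map fun k => T (x k)).prod

/-- The cylinder `[x|n]` of sequences agreeing with `x` on the first `n` coordinates. -/
def cylinder {m : ℕ} (x : ℕ → Fin m) (n : ℕ) : Set (ℕ → Fin m) :=
  { y | ∀ k < n, y k = x k }

/-- `sval M k` is the `(k+1)`-th largest singular value `α_{k+1}(M)` of `M`. -/
def sval {d : ℕ} (M : Matrix (Fin d) (Fin d) ℝ) (k : Fin d) : ℝ :=
  Real.sqrt
    ((by simpa using Matrix.isHermitian_conjTranspose_mul_self M : (M.transpose * M).IsHermitian).eigenvalues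
      (Tuple.sort (by simpa using Matrix.isHermitian_conjTranspose_mul_self M : (M.transpose * M).IsHermitian).eigenvalues k.rev))

/-- `svalN M i` is `α_{i+1}(M)` for `i < d`, junk value `0` otherwise. -/
def svalN {d : ℕ} (M : Matrix (Fin d) (Fin d) ℝ) (i : ℕ) : ℝ :=
  if h : i < d then sval M ⟨i, h⟩ else 0

/-- The singular value function `φ^s`. -/
def phi {d : ℕ} (s : ℝ) (M : Matrix (Fin d) (Fin d) ℝ) : ℝ :=
  if s < (d : ℝ) then
    (∏ i ∈ Finset.range ⌊s⌋₊, svalN M i) * svalN M ⌊s⌋₊ ^ (s - (⌊s⌋₊ : ℝ))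
  else |M.det| ^ (s / (d : ℝ))

/-- The singular value function extended to `s ∈ [0,∞]`, with `φ^∞ = 0`. -/
def phiE {d : ℕ} (s : ℝ≥0∞) (M : Matrix (Fin d) (Fin d) ℝ) : ℝ≥0∞ :=
  if s = ⊤ then 0 else ENNReal.ofReal (phi s.toReal M)

/-- The continuous linear map on Euclidean space induced by a matrix. -/
def mCLM {d : ℕ} (M : Matrix (Fin d) (Fin d) ℝ) :
    EuclideanSpace ℝ (Fin d) →L[ℝ] EuclideanSpace ℝ (Fin d) :=
  Matrix.toEuclideanCLM (𝕜 := ℝ) M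

/-- `seqComp F n = F 0 ∘ F 1 ∘ ⋯ ∘ F (n-1)`. -/
def seqComp {E : Type*} (F : ℕ → E → E) : ℕ → E → E
  | 0 => id
  | n + 1 => F 0 ∘ seqComp (fun k => F (k + 1)) n

/-- The coding map `π^a(x) = lim_n f^a_{x_1} ∘ ⋯ ∘ f^a_{x_n}(0)`. -/
def codingMap {m d : ℕ} (T : Fin m → Matrix (Fin d) (Fin d) ℝ)
    (a : Fin m → EuclideanSpace ℝ (Fin d)) (x : ℕ → Fin m) : EuclideanSpace ℝ (Fin d) :=
  limUnder atTop fun n => seqComp (fun k y => mCLM (T (x k)) y + a (x k)) n 0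

/-- `Z_M(r) = ∏_{k=1}^d min{r, α_k(M)}/α_k(M)`. -/
def Zmat {d : ℕ} (M : Matrix (Fin d) (Fin d) ℝ) (r : ℝ) : ℝ :=
  ∏ k : Fin d, min r (sval M k) / sval M k

/-- `Z_{x|n}(r)`. -/
def Zword {m d : ℕ} (T : Fin m → Matrix (Fin d) (Fin d) ℝ) (x : ℕ → Fin m) (n : ℕ)
    (r : ℝ) : ℝ :=
  Zmat (wordProd T x n) r

/-- The length `|x ∧ y|` of the longest common initial segment of `x` and `y`. -/
def firstDiff {m : ℕ} (x y : ℕ → Fin m) : ℕ :=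
  sInf { n | x n ≠ y n }

/-- `Z_{x ∧ y}(r)`, with the convention `Z_{x ∧ y}(r) = 1` for `x = y`. -/
def Zwedge {m d : ℕ} (T : Fin m → Matrix (Fin d) (Fin d) ℝ) (x y : ℕ → Fin m) (r : ℝ) : ℝ :=
  letI := Classical.dec (x = y)
  if x = y then 1 else Zword T x (firstDiff x y) r

/-- `G_μ(x,r) = ∫ Z_{x∧y}(r) dμ(y)`. -/
def Gfun {m d : ℕ} (T : Fin m → Matrix (Fin d) (Fin d) ℝ) (μ : Measure (ℕ → Fin m))
    (x : ℕ → Fin m) (r : ℝ) : ℝ :=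
  ∫ y, Zwedge T x y r ∂μ

/-- `D(μ,x) = limsup_{r→0} log G_μ(x,r)/log r`. -/
def Dfun {m d : ℕ} (T : Fin m → Matrix (Fin d) (Fin d) ℝ) (μ : Measure (ℕ → Fin m))
    (x : ℕ → Fin m) : ℝ≥0∞ :=
  limsup (fun r : ℝ => ENNReal.ofReal (Real.log (Gfun T μ x r) / Real.log r)) (𝓝[>] 0)

/-- Lower local dimension of a measure on `ℝ^d` at a point. -/
def lowerLocalDim {d : ℕ} (η : Measure (EuclideanSpace ℝ (Fin d)))
    (z : EuclideanSpace ℝ (Fin d)) : ℝ≥0∞ :=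
  liminf (fun r : ℝ => ENNReal.ofReal (Real.log (η (closedBall z r)).toReal / Real.log r))
    (𝓝[>] 0)

/-- Upper local dimension of a measure on `ℝ^d` at a point. -/
def upperLocalDim {d : ℕ} (η : Measure (EuclideanSpace ℝ (Fin d)))
    (z : EuclideanSpace ℝ (Fin d)) : ℝ≥0∞ :=
  limsup (fun r : ℝ => ENNReal.ofReal (Real.log (η (closedBall z r)).toReal / Real.log r))
    (𝓝[>] 0)

/-- Lower Hausdorff dimension of a measure. -/
def lowerHausdorffDim {d : ℕ} (η : Measure (EuclideanSpace ℝ (Fin d))) : ℝ≥0∞ :=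
  essInf (lowerLocalDim η) η

/-- Upper Hausdorff dimension of a measure. -/
def upperHausdorffDim {d : ℕ} (η : Measure (EuclideanSpace ℝ (Fin d))) : ℝ≥0∞ :=
  essSup (lowerLocalDim η) η

/-- Lower packing dimension of a measure. -/
def lowerPackingDim {d : ℕ} (η : Measure (EuclideanSpace ℝ (Fin d))) : ℝ≥0∞ :=
  essInf (upperLocalDim η) η

/-- Upper packing dimension of a measure. -/
def upperPackingDim {d : ℕ} (η : Measure (EuclideanSpace ℝ (Fin d))) : ℝ≥0∞ :=
  essSup (upperLocalDim η) η

/-- A measure is exact dimensional if its local dimension exists a.e. and is a.e. constant. -/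
def exactDimensional {d : ℕ} (η : Measure (EuclideanSpace ℝ (Fin d))) : Prop :=
  ∃ C : ℝ≥0∞, ∀ᵐ z ∂η, lowerLocalDim η z = C ∧ upperLocalDim η z = C

/-- Cylinder of a finite word given as a list. -/
def cylL {m : ℕ} (I : List (Fin m)) : Set (ℕ → Fin m) :=
  { y | ∀ (k : ℕ) (hk : k < I.length), y k = I.get ⟨k, hk⟩ }

/-- Word product for a word given as a list. -/
def wordProdL {m d : ℕ} (T : Fin m → Matrix (Fin d) (Fin d) ℝ) (I : List (Fin m)) :
    Matrix (Fin d) (Fin d) ℝ :=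
  (I.map T).prod

/-- `M^s_n(E)`: the Falconer net pre-measure at level `n`. -/
def netMeasureAux {m d : ℕ} (T : Fin m → Matrix (Fin d) (Fin d) ℝ) (s : ℝ)
    (E : Set (ℕ → Fin m)) (n : ℕ) : ℝ≥0∞ :=
  ⨅ (C : Set (List (Fin m))) (_ : ∀ I ∈ C, n ≤ I.length) (_ : E ⊆ ⋃ I ∈ C, cylL I),
    ∑' I : C, ENNReal.ofReal (phi s (wordProdL T (I : List (Fin m))))

/-- `M^s(E) = lim_n M^s_n(E)`. -/
def netMeasure {m d : ℕ} (T : Fin m → Matrix (Fin d) (Fin d) ℝ) (s : ℝ)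
    (E : Set (ℕ → Fin m)) : ℝ≥0∞ :=
  ⨆ n, netMeasureAux T s E n

/-- `dim_M E`. -/
def dimM {m d : ℕ} (T : Fin m → Matrix (Fin d) (Fin d) ℝ) (E : Set (ℕ → Fin m)) : ℝ :=
  sInf { s : ℝ | 0 ≤ s ∧ netMeasure T s E < ⊤ }

/-- The energy `∬ Z_{x∧y}(r) dμ(x) dμ(y)`. -/
def energy {m d : ℕ} (T : Fin m → Matrix (Fin d) (Fin d) ℝ) (μ : Measure (ℕ → Fin m))
    (r : ℝ) : ℝ :=
  ∫ x, ∫ y, Zwedge T x y r ∂μ ∂μ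

/-- The `r`-capacity `C_r(E)` of a set `E ⊆ Σ`. -/
def capFn {m d : ℕ} (T : Fin m → Matrix (Fin d) (Fin d) ℝ) (E : Set (ℕ → Fin m)) (r : ℝ) : ℝ :=
  (sInf { v : ℝ | ∃ μ : Measure (ℕ → Fin m),
      IsProbabilityMeasure μ ∧ μ Eᶜ = 0 ∧ v = energy T μ r })⁻¹

/-- Lower capacity dimension. -/
def lowerCapDim {m d : ℕ} (T : Fin m → Matrix (Fin d) (Fin d) ℝ)
    (E : Set (ℕ → Fin m)) : ℝ≥0∞ :=
  liminf (fun r : ℝ => ENNReal.ofReal (Real.log (capFn T E r) / (-Real.log r))) (𝓝[>] 0)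

/-- Upper capacity dimension. -/
def upperCapDim {m d : ℕ} (T : Fin m → Matrix (Fin d) (Fin d) ℝ)
    (E : Set (ℕ → Fin m)) : ℝ≥0∞ :=
  limsup (fun r : ℝ => ENNReal.ofReal (Real.log (capFn T E r) / (-Real.log r))) (𝓝[>] 0)

/-- `N_r(F)`: the minimal number of sets of diameter at most `r` needed to cover `F`. -/
def coverNum {d : ℕ} (F : Set (EuclideanSpace ℝ (Fin d))) (r : ℝ) : ℝ≥0∞ :=
  ⨅ (C : Finset (Set (EuclideanSpace ℝ (Fin d)))) (_ : F ⊆ ⋃ s ∈ C, s)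
    (_ : ∀ s ∈ C, Metric.diam s ≤ r), (C.card : ℝ≥0∞)

/-- Lower box-counting dimension. -/
def lowerBoxDim {d : ℕ} (F : Set (EuclideanSpace ℝ (Fin d))) : ℝ≥0∞ :=
  liminf (fun r : ℝ => ENNReal.ofReal (Real.log (coverNum F r).toReal / (-Real.log r))) (𝓝[>] 0)

/-- Upper box-counting dimension. -/
def upperBoxDim {d : ℕ} (F : Set (EuclideanSpace ℝ (Fin d))) : ℝ≥0∞ :=
  limsup (fun r : ℝ => ENNReal.ofReal (Real.log (coverNum F r).toReal / (-Real.log r))) (𝓝[>] 0)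


/-!
Let `R = A / (1 - α₊)` with `A = ∑ ‖aᵢ‖`, so that `‖π x‖ ≤ R` and
`π [x|n] ⊆ π x + T_{x|n} B(0, 2R)`. In the frame of the right singular vectors of `T_{x|n}` this
ellipsoid lies in a box with half-sides `2R αₖ(T_{x|n})`, which contains at most
`∏ₖ (C αₖ / r + 1)` points that are `r/2` apart; multiplying by
`Z_{x|n}(r) = ∏ₖ min(r, αₖ) / αₖ` leaves at most a constant `C'`.

Let `t ⊆ π(E)` be `r/2`-separated, lift it to `S ⊆ E` and let `μ` be uniform on `S`. For `x ∈ S`,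
charge each `y ∈ S` to the cylinder `[x|n]`, `n = min(|x ∧ y|, n₀)`, where `α₊^n₀ ≤ r` forces
`Z_{x|n₀}(r) = 1`. This bounds every row sum `∑_y Z_{x∧y}(r)` by `(n₀ + 1) C'`, hence the energy
of `μ` by `(n₀ + 1) C' / #S`, and so `#t ≤ (n₀ + 1) C' C_r(E)`. A maximal such `t` is an
`r/2`-net of `π(E)`, so `N_r(π(E)) ≤ #t`, and `n₀ + 1 ≤ log r / log α₊ + 2`.
-/

section SingularValues

open Matrix
open scoped RealInnerProductSpace

variable {d : ℕ} (M : Matrix (Fin d) (Fin d) ℝ)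

lemma mCLM_mul_apply (A B : Matrix (Fin d) (Fin d) ℝ) (v : EuclideanSpace ℝ (Fin d)) :
    mCLM (A * B) v = mCLM A (mCLM B v) := by
  rw [mCLM, map_mul]
  rfl

lemma inner_mCLM_left_eq (v w : EuclideanSpace ℝ (Fin d)) :
    ⟪mCLM M v, w⟫ = ⟪v, mCLM Mᵀ w⟫ := by
  have : mCLM Mᵀ = ContinuousLinearMap.adjoint (mCLM M) := by
    rw [← ContinuousLinearMap.star_eq_adjoint, mCLM, mCLM, ← map_star, star_eq_conjTranspose,
      conjTranspose_eq_transpose_of_trivial]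
  rw [this, ContinuousLinearMap.adjoint_inner_right]

lemma isHermitian_transpose_mul_self : (Mᵀ * M).IsHermitian := by
  simpa using isHermitian_conjTranspose_mul_self M

lemma sval_nonneg (k : Fin d) : 0 ≤ sval M k :=
  Real.sqrt_nonneg _

/-- Eigenvectors of `Mᵀ M`, ordered so that the `k`-th one belongs to the eigenvalue
`sval M k ^ 2`. -/
def rightSingularBasis : OrthonormalBasis (Fin d) ℝ (EuclideanSpace ℝ (Fin d)) :=
  (isHermitian_transpose_mul_self M).eigenvectorBasis.reindex
    (Fin.revPerm.trans (Tuple.sort (isHermitian_transpose_mul_self M).eigenvalues)).symm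

lemma inner_mCLM_mCLM_rightSingularBasis (v : EuclideanSpace ℝ (Fin d)) (k : Fin d) :
    ⟪mCLM M v, mCLM M (rightSingularBasis M k)⟫ = sval M k ^ 2 * ⟪v, rightSingularBasis M k⟫ := by
  set hH := isHermitian_transpose_mul_self M
  set j := Tuple.sort hH.eigenvalues k.rev
  have hb : rightSingularBasis M k = hH.eigenvectorBasis j := by
    simp [rightSingularBasis, j]
  have heig : mCLM (Mᵀ * M) (hH.eigenvectorBasis j) = hH.eigenvalues j • hH.eigenvectorBasis j := by
    apply (WithLp.equiv 2 _).injective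
    simpa [mCLM] using hH.mulVec_eigenvectorBasis j
  have hsval : sval M k ^ 2 = hH.eigenvalues j :=
    Real.sq_sqrt ((posSemidef_conjTranspose_mul_self M).eigenvalues_nonneg j)
  rw [hb, inner_mCLM_left_eq, ← mCLM_mul_apply, heig, real_inner_smul_right, hsval]

lemma sval_eq_norm_mCLM_rightSingularBasis (k : Fin d) :
    sval M k = ‖mCLM M (rightSingularBasis M k)‖ := by
  have h := inner_mCLM_mCLM_rightSingularBasis M (rightSingularBasis M k) k
  rw [real_inner_self_eq_norm_sq, real_inner_self_eq_norm_sq, (rightSingularBasis M).norm_eq_one,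
    one_pow, mul_one] at h
  exact ((sq_eq_sq₀ (norm_nonneg _) (sval_nonneg M k)).1 h).symm

lemma sval_le_norm (k : Fin d) : sval M k ≤ ‖mCLM M‖ := by
  rw [sval_eq_norm_mCLM_rightSingularBasis]
  simpa using (mCLM M).le_opNorm (rightSingularBasis M k)

lemma sval_pos (hM : IsUnit M) (k : Fin d) : 0 < sval M k := by
  have hinj : Function.Injective (mCLM M) := by
    obtain ⟨N, hN⟩ := hM.exists_left_inv
    intro x y hxy
    have h := congrArg (mCLM N) hxy
    rwa [← mCLM_mul_apply, ← mCLM_mul_apply, hN, mCLM, map_one] at h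
  rw [sval_eq_norm_mCLM_rightSingularBasis, norm_pos_iff]
  exact fun h => (rightSingularBasis M).orthonormal.ne_zero k
    (hinj (h.trans (map_zero _).symm))

lemma exists_orthonormalBasis_abs_repr_mCLM_le (hM : IsUnit M) :
    ∃ b : OrthonormalBasis (Fin d) ℝ (EuclideanSpace ℝ (Fin d)),
      ∀ v k, |b.repr (mCLM M v) k| ≤ sval M k * ‖v‖ := by
  let u := rightSingularBasis M
  let w : Fin d → EuclideanSpace ℝ (Fin d) := fun k => (sval M k)⁻¹ • mCLM M (u k)
  have hinner : ∀ v k, ⟪mCLM M v, w k⟫ = sval M k * ⟪v, u k⟫ := by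
    intro v k
    have := (sval_pos M hM k).ne'
    rw [real_inner_smul_right, inner_mCLM_mCLM_rightSingularBasis]
    field_simp
    rfl
  have hw : Orthonormal ℝ w := by
    rw [orthonormal_iff_ite]
    intro j k
    have := (sval_pos M hM j).ne'
    rw [real_inner_smul_left, hinner, orthonormal_iff_ite.mp u.orthonormal j k]
    split_ifs with hjk
    · subst hjk
      field_simp
    · simp
  refine ⟨OrthonormalBasis.mk hw (hw.linearIndependent.span_eq_top_of_card_eq_finrank'
    (by simp)).ge, fun v k => ?_⟩
  rw [OrthonormalBasis.repr_apply_apply, OrthonormalBasis.coe_mk, real_inner_comm, hinner,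
    abs_mul, abs_of_pos (sval_pos M hM k)]
  exact mul_le_mul_of_nonneg_left (by simpa using abs_real_inner_le_norm v (u k))
    (sval_pos M hM k).le

end SingularValues

section Packing

lemma abs_sub_lt_of_natFloor_div_eq {x y h : ℝ} (hx : 0 ≤ x) (hy : 0 ≤ y) (hh : 0 < h)
    (hxy : ⌊x / h⌋₊ = ⌊y / h⌋₊) : |x - y| < h := by
  have := Int.abs_sub_lt_one_of_floor_eq_floor (a := x / h) (b := y / h) (by
    rw [← Int.natCast_floor_eq_floor (div_nonneg hx hh.le),
      ← Int.natCast_floor_eq_floor (div_nonneg hy hh.le), hxy])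
  rwa [← sub_div, abs_div, abs_of_pos hh, div_lt_one hh] at this

lemma dist_sq_le_card_mul_sq {ι E : Type*} [Fintype ι] [NormedAddCommGroup E]
    [InnerProductSpace ℝ E] (b : OrthonormalBasis ι ℝ E) {p q : E} {h : ℝ}
    (hpq : ∀ k, |b.repr (p - q) k| ≤ h) : dist p q ^ 2 ≤ Fintype.card ι * h ^ 2 := calc
  dist p q ^ 2 = ∑ k, |b.repr (p - q) k| ^ 2 := by
    rw [dist_eq_norm, ← b.repr.norm_map, EuclideanSpace.norm_sq_eq]
    simp
  _ ≤ ∑ _k : ι, h ^ 2 :=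
    Finset.sum_le_sum fun k _ => pow_le_pow_left₀ (abs_nonneg _) (hpq k) 2
  _ = Fintype.card ι * h ^ 2 := by simp

/-- Grid of mesh `h = δ / √(card ι + 1)`: two points in the same cell are at distance
`≤ √(card ι) h < δ`, so the grid cell map is injective on a `δ`-separated set. -/
lemma card_le_prod_of_abs_repr_le {ι E : Type*} [Fintype ι] [NormedAddCommGroup E]
    [InnerProductSpace ℝ E] (b : OrthonormalBasis ι ℝ E) (c : E) {w : ι → ℝ} (hw : ∀ k, 0 ≤ w k)
    {δ : ℝ} (hδ : 0 < δ) (s : Finset E) (hbox : ∀ p ∈ s, ∀ k, |b.repr (p - c) k| ≤ w k)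
    (hsep : (s : Set E).Pairwise fun p q => δ ≤ dist p q) :
    (s.card : ℝ) ≤ ∏ k, (2 * √(Fintype.card ι + 1) * w k / δ + 1) := by
  classical
  set h := δ / √(Fintype.card ι + 1) with hh
  have hh0 : 0 < h := div_pos hδ (Real.sqrt_pos.mpr (by positivity))
  have hcoord : ∀ p ∈ s, ∀ k, 0 ≤ b.repr (p - c) k + w k := fun p hp k => by
    linarith [neg_abs_le (b.repr (p - c) k), hbox p hp k]
  let cell : E → ι → ℕ := fun p k => ⌊(b.repr (p - c) k + w k) / h⌋₊
  have hmaps : ∀ p ∈ s, cell p ∈ Fintype.piFinset fun k => Finset.range (⌊2 * w k / h⌋₊ + 1) := by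
    simp only [Fintype.mem_piFinset, Finset.mem_range, Nat.lt_succ_iff]
    exact fun p hp k => Nat.floor_le_floor (by
      gcongr
      linarith [le_abs_self (b.repr (p - c) k), hbox p hp k])
  have hinj : Set.InjOn cell s := by
    intro p hp q hq hpq
    by_contra hne
    have hclose : ∀ k, |b.repr (p - q) k| ≤ h := fun k => by
      have := abs_sub_lt_of_natFloor_div_eq (hcoord p hp k) (hcoord q hq k) hh0 (congrFun hpq k)
      rw [add_sub_add_right_eq_sub, ← PiLp.sub_apply, ← map_sub, sub_sub_sub_cancel_right] at this
      exact this.le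
    have hdist : dist p q ^ 2 < δ ^ 2 := calc
      dist p q ^ 2 ≤ Fintype.card ι * h ^ 2 := dist_sq_le_card_mul_sq b hclose
      _ < (Fintype.card ι + 1) * h ^ 2 := by nlinarith
      _ = δ ^ 2 := by
        rw [hh, div_pow, Real.sq_sqrt (by positivity)]
        field_simp
    exact (hsep hp hq hne).not_gt (pow_lt_pow_iff_left₀ dist_nonneg hδ.le two_ne_zero |>.mp hdist)
  calc (s.card : ℝ) ≤ ∏ k, ((⌊2 * w k / h⌋₊ : ℕ) + 1 : ℝ) := by
        have := Finset.card_le_card_of_injOn cell hmaps hinj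
        simp only [Fintype.card_piFinset, Finset.card_range] at this
        exact_mod_cast this
    _ ≤ ∏ k, (2 * √(Fintype.card ι + 1) * w k / δ + 1) := by
        gcongr with k
        refine (Nat.floor_le (by have := hw k; positivity)).trans (le_of_eq ?_)
        rw [hh]
        field_simp

end Packing

section Covering

lemma coverNum_le_coveringNumber {d : ℕ} (F : Set (EuclideanSpace ℝ (Fin d))) (ε : ℝ≥0) :
    coverNum F (2 * ε) ≤ coveringNumber ε F := by
  classical
  by_cases htop : coveringNumber ε F = ⊤
  · simp [htop]
  obtain ⟨C, -, hCfin, hcover, hcard⟩ := exists_set_encard_eq_coveringNumber htop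
  rw [← hcard, hCfin.encard_eq_coe_toFinset_card, ENat.toENNReal_coe]
  refine (iInf₂_le (hCfin.toFinset.image fun y => closedBall y ε) ?_).trans ?_
  · intro z hz
    obtain ⟨y, hy, hzy⟩ := Set.mem_iUnion₂.mp (isCover_iff_subset_iUnion_closedBall.mp hcover hz)
    exact Set.mem_biUnion (Finset.mem_image_of_mem _ (hCfin.mem_toFinset.mpr hy)) hzy
  · refine (iInf_le _ fun s hs => ?_).trans (by exact_mod_cast Finset.card_image_le)
    obtain ⟨y, -, rfl⟩ := Finset.mem_image.mp hs
    exact diam_closedBall ε.coe_nonneg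

lemma packingNumber_le_of_forall_finset {X : Type*} [PseudoMetricSpace X] {ε : ℝ≥0} {A : Set X}
    {B : ℕ} (h : ∀ t : Finset X, ↑t ⊆ A → (t : Set X).Pairwise (fun p q => ε ≤ dist p q) →
      t.card ≤ B) :
    packingNumber ε A ≤ B := by
  have hsep : ∀ C : Set X, IsSeparated ε C → C.Pairwise fun p q => ε ≤ dist p q :=
    fun C hC p hp q hq hpq => by
      have : (ε : ℝ≥0∞) < edist p q := hC hp hq hpq
      rw [edist_nndist, ENNReal.coe_lt_coe] at this
      exact (NNReal.coe_le_coe.2 this.le).trans_eq (coe_nndist p q)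
  refine iSup₂_le fun C hCA => iSup_le fun hC => ?_
  by_cases hfin : C.Finite
  · rw [hfin.encard_eq_coe_toFinset_card, Nat.cast_le]
    exact h _ (by simpa using hCA) (by simpa using hsep C hC)
  · obtain ⟨t, htC, htcard⟩ := Set.Infinite.exists_subset_card_eq hfin (B + 1)
    have := h t (htC.trans hCA) ((hsep C hC).mono htC)
    omega

end Covering

section CodingMap

variable {m d : ℕ} (T : Fin m → Matrix (Fin d) (Fin d) ℝ) (a : Fin m → EuclideanSpace ℝ (Fin d))

lemma wordProd_succ (x : ℕ → Fin m) (n : ℕ) :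
    wordProd T x (n + 1) = T (x 0) * wordProd T (fun k => x (k + 1)) n := by
  rw [wordProd, wordProd, List.range_succ_eq_map]
  simp [List.map_map, Function.comp_def]

lemma isUnit_wordProd (hT : ∀ i, IsUnit (T i)) (x : ℕ → Fin m) (n : ℕ) :
    IsUnit (wordProd T x n) := by
  induction n generalizing x with
  | zero => exact isUnit_one
  | succ n ih => rw [wordProd_succ]; exact (hT (x 0)).mul (ih _)

lemma norm_mCLM_wordProd_le {α : ℝ} (hT : ∀ i, ‖mCLM (T i)‖ ≤ α) (x : ℕ → Fin m) (n : ℕ) :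
    ‖mCLM (wordProd T x n)‖ ≤ α ^ n := by
  induction n generalizing x with
  | zero =>
    simpa [wordProd, mCLM, ContinuousLinearMap.one_def] using ContinuousLinearMap.norm_id_le
  | succ n ih =>
    rw [wordProd_succ, pow_succ', mCLM, map_mul]
    exact (norm_mul_le _ _).trans
      (mul_le_mul (hT _) (ih _) (norm_nonneg _) ((norm_nonneg _).trans (hT (x 0))))

def ifsMap (i : Fin m) (y : EuclideanSpace ℝ (Fin d)) : EuclideanSpace ℝ (Fin d) :=
  mCLM (T i) y + a i

def partialCoding (x : ℕ → Fin m) (n : ℕ) : EuclideanSpace ℝ (Fin d) :=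
  seqComp (fun k => ifsMap T a (x k)) n 0

lemma partialCoding_succ (x : ℕ → Fin m) (n : ℕ) :
    partialCoding T a x (n + 1) = ifsMap T a (x 0) (partialCoding T a (fun k => x (k + 1)) n) :=
  rfl

lemma ifsMap_sub_ifsMap (i : Fin m) (y z : EuclideanSpace ℝ (Fin d)) :
    ifsMap T a i y - ifsMap T a i z = mCLM (T i) (y - z) := by
  rw [ifsMap, ifsMap, map_sub]
  abel

lemma continuous_ifsMap (i : Fin m) : Continuous (ifsMap T a i) :=
  (mCLM (T i)).continuous.add continuous_const

variable {T a} {α A : ℝ} (hT : ∀ i, ‖mCLM (T i)‖ ≤ α) (hA : ∀ i, ‖a i‖ ≤ A)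
include hT hA

lemma dist_partialCoding_succ_le (x : ℕ → Fin m) (n : ℕ) :
    dist (partialCoding T a x n) (partialCoding T a x (n + 1)) ≤ A * α ^ n := by
  induction n generalizing x with
  | zero => simpa [partialCoding, seqComp, ifsMap] using hA (x 0)
  | succ n ih =>
    rw [partialCoding_succ, partialCoding_succ T a x (n + 1), dist_eq_norm, ifsMap_sub_ifsMap,
      pow_succ', mul_left_comm]
    refine ((mCLM _).le_opNorm _).trans (mul_le_mul (hT _) ?_ (norm_nonneg _)
      ((norm_nonneg _).trans (hT (x 0))))
    rw [← dist_eq_norm]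
    exact ih _

variable (hα : α < 1)
include hα

lemma tendsto_partialCoding (x : ℕ → Fin m) :
    Tendsto (partialCoding T a x) atTop (𝓝 (codingMap T a x)) :=
  tendsto_nhds_limUnder (cauchySeq_tendsto_of_complete
    (cauchySeq_of_le_geometric α A hα (dist_partialCoding_succ_le hT hA x)))

lemma codingMap_eq_ifsMap (x : ℕ → Fin m) :
    codingMap T a x = ifsMap T a (x 0) (codingMap T a (fun k => x (k + 1))) :=
  tendsto_nhds_unique ((tendsto_partialCoding hT hA hα x).comp (tendsto_add_atTop_nat 1))
    (((continuous_ifsMap T a _).tendsto _).comp (tendsto_partialCoding hT hA hα _))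

lemma norm_partialCoding_le (x : ℕ → Fin m) (n : ℕ) :
    ‖partialCoding T a x n‖ ≤ A / (1 - α) := by
  have hA0 : 0 ≤ A := (norm_nonneg _).trans (hA (x 0))
  have hα0 : 0 ≤ α := (norm_nonneg _).trans (hT (x 0))
  induction n generalizing x with
  | zero => simpa [partialCoding, seqComp] using div_nonneg hA0 (sub_nonneg.2 hα.le)
  | succ n ih =>
    rw [partialCoding_succ, ifsMap]
    calc ‖mCLM (T (x 0)) (partialCoding T a _ n) + a (x 0)‖
        ≤ α * (A / (1 - α)) + A :=
          (norm_add_le _ _).trans (add_le_add (((mCLM _).le_opNorm _).trans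
            (mul_le_mul (hT _) (ih _) (norm_nonneg _) hα0)) (hA _))
      _ = A / (1 - α) := by field_simp [(sub_pos.2 hα).ne']; ring

lemma norm_codingMap_le (x : ℕ → Fin m) : ‖codingMap T a x‖ ≤ A / (1 - α) :=
  le_of_tendsto' (tendsto_partialCoding hT hA hα x).norm (norm_partialCoding_le hT hA hα x)

lemma exists_codingMap_eq_add_wordProd {x y : ℕ → Fin m} {n : ℕ} (hy : y ∈ cylinder x n) :
    ∃ v, ‖v‖ ≤ 2 * (A / (1 - α)) ∧
      codingMap T a y = codingMap T a x + mCLM (wordProd T x n) v := by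
  induction n generalizing x y with
  | zero =>
    refine ⟨codingMap T a y - codingMap T a x, ?_, by simp [wordProd, mCLM]⟩
    have hx := norm_codingMap_le hT hA hα x
    have hy := norm_codingMap_le hT hA hα y
    exact (norm_sub_le _ _).trans (by linarith)
  | succ n ih =>
    obtain ⟨v, hv, hyx⟩ := ih (x := fun k => x (k + 1)) (y := fun k => y (k + 1))
      fun k hk => hy (k + 1) (by omega)
    refine ⟨v, hv, ?_⟩
    rw [codingMap_eq_ifsMap hT hA hα y, codingMap_eq_ifsMap hT hA hα x, hy 0 n.succ_pos, hyx,
      wordProd_succ, mCLM_mul_apply, ifsMap, ifsMap, map_add]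
    abel

end CodingMap

section ZFunction

lemma mul_min_div_le {C r s : ℝ} (hC : 0 ≤ C) (hr : 0 ≤ r) (hs : 0 ≤ s) :
    (C * s + 1) * (min r s / s) ≤ C * r + 1 := by
  rcases hs.eq_or_lt with rfl | hs
  · rw [div_zero, mul_zero]
    positivity
  rcases le_total s r with h | h
  · rw [min_eq_right h, div_self hs.ne', mul_one]
    gcongr
  · rw [min_eq_left h, add_mul, mul_assoc, mul_div_cancel₀ _ hs.ne', one_mul]
    gcongr
    exact div_le_one_of_le₀ h hs.le

lemma le_min_div_self {r s : ℝ} (hr : 0 ≤ r) (hr1 : r ≤ 1) (hs : 0 < s) (hs1 : s ≤ 1) :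
    r ≤ min r s / s := by
  rcases le_total s r with h | h
  · rwa [min_eq_right h, div_self hs.ne']
  · rw [min_eq_left h, le_div_iff₀ hs]
    exact mul_le_of_le_one_right hr hs1

variable {d : ℕ}

lemma min_div_sval_nonneg (M : Matrix (Fin d) (Fin d) ℝ) {r : ℝ} (hr : 0 ≤ r) (k : Fin d) :
    0 ≤ min r (sval M k) / sval M k :=
  div_nonneg (le_min hr (sval_nonneg M k)) (sval_nonneg M k)

lemma Zmat_nonneg (M : Matrix (Fin d) (Fin d) ℝ) {r : ℝ} (hr : 0 ≤ r) : 0 ≤ Zmat M r :=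
  Finset.prod_nonneg fun k _ => min_div_sval_nonneg M hr k

lemma Zmat_le_one (M : Matrix (Fin d) (Fin d) ℝ) {r : ℝ} (hr : 0 ≤ r) : Zmat M r ≤ 1 :=
  Finset.prod_le_one (fun k _ => min_div_sval_nonneg M hr k)
    fun k _ => div_le_one_of_le₀ (min_le_right _ _) (sval_nonneg M k)

lemma Zmat_eq_one {M : Matrix (Fin d) (Fin d) ℝ} (hM : IsUnit M) {r : ℝ}
    (h : ∀ k, sval M k ≤ r) : Zmat M r = 1 :=
  Finset.prod_eq_one fun k _ => by rw [min_eq_right (h k), div_self (sval_pos M hM k).ne']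

lemma pow_le_Zmat {M : Matrix (Fin d) (Fin d) ℝ} (hM : IsUnit M) (hM1 : ‖mCLM M‖ ≤ 1) {r : ℝ}
    (hr : 0 < r) (hr1 : r ≤ 1) : r ^ d ≤ Zmat M r := by
  calc r ^ d = ∏ _k : Fin d, r := by simp
    _ ≤ Zmat M r := Finset.prod_le_prod (fun _ _ => hr.le) fun k _ =>
      le_min_div_self hr.le hr1 (sval_pos M hM k) ((sval_le_norm M k).trans hM1)

/-- The `k`-th factor of `Z_M(r)` compensates the side `α_k(M)` of the box containing
`c + M(B(0, R))`. -/
lemma card_mul_Zmat_le {M : Matrix (Fin d) (Fin d) ℝ} (hM : IsUnit M)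
    (c : EuclideanSpace ℝ (Fin d)) {R r δ : ℝ} (hR : 0 ≤ R) (hr : 0 ≤ r) (hδ : 0 < δ)
    (s : Finset (EuclideanSpace ℝ (Fin d)))
    (hs : ∀ p ∈ s, ∃ v, ‖v‖ ≤ R ∧ p = c + mCLM M v)
    (hsep : (s : Set (EuclideanSpace ℝ (Fin d))).Pairwise fun p q => δ ≤ dist p q) :
    s.card * Zmat M r ≤ (2 * √(d + 1) * R / δ * r + 1) ^ d := by
  obtain ⟨b, hb⟩ := exists_orthonormalBasis_abs_repr_mCLM_le M hM
  have hcard := card_le_prod_of_abs_repr_le b c (w := fun k => R * sval M k)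
    (fun k => mul_nonneg hR (sval_nonneg M k)) hδ s (fun p hp k => by
      obtain ⟨v, hv, rfl⟩ := hs p hp
      rw [add_sub_cancel_left, mul_comm R]
      exact (hb v k).trans (mul_le_mul_of_nonneg_left hv (sval_nonneg M k))) hsep
  rw [Fintype.card_fin] at hcard
  have hC : 0 ≤ 2 * √(d + 1) * R / δ := by positivity
  calc s.card * Zmat M r
      ≤ (∏ k, (2 * √(d + 1) * (R * sval M k) / δ + 1)) * Zmat M r :=
        mul_le_mul_of_nonneg_right hcard (Zmat_nonneg M hr)
    _ = ∏ k, ((2 * √(d + 1) * R / δ) * sval M k + 1) * (min r (sval M k) / sval M k) := by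
        rw [Zmat, ← Finset.prod_mul_distrib]
        congr with k
        ring
    _ ≤ ∏ _k : Fin d, (2 * √(d + 1) * R / δ * r + 1) :=
        Finset.prod_le_prod (fun k _ => mul_nonneg
          (add_nonneg (mul_nonneg hC (sval_nonneg M k)) zero_le_one) (min_div_sval_nonneg M hr k))
          fun k _ => mul_min_div_le hC hr (sval_nonneg M k)
    _ = (2 * √(d + 1) * R / δ * r + 1) ^ d := by simp

variable {m : ℕ} (T : Fin m → Matrix (Fin d) (Fin d) ℝ)

lemma Zwedge_self (x : ℕ → Fin m) (r : ℝ) : Zwedge T x x r = 1 := by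
  simp [Zwedge]

lemma Zwedge_of_ne {x y : ℕ → Fin m} (h : x ≠ y) (r : ℝ) :
    Zwedge T x y r = Zword T x (firstDiff x y) r := by
  simp [Zwedge, h]

lemma Zwedge_nonneg {r : ℝ} (hr : 0 ≤ r) (x y : ℕ → Fin m) : 0 ≤ Zwedge T x y r := by
  by_cases h : x = y
  · simp [h, Zwedge_self]
  · exact (Zwedge_of_ne T h r).symm ▸ Zmat_nonneg _ hr

lemma Zwedge_le_one {r : ℝ} (hr : 0 ≤ r) (x y : ℕ → Fin m) : Zwedge T x y r ≤ 1 := by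
  by_cases h : x = y
  · simp [h, Zwedge_self]
  · exact (Zwedge_of_ne T h r).symm ▸ Zmat_le_one _ hr

lemma norm_Zwedge_le_one {r : ℝ} (hr : 0 ≤ r) (x y : ℕ → Fin m) : ‖Zwedge T x y r‖ ≤ 1 := by
  rw [Real.norm_of_nonneg (Zwedge_nonneg T hr x y)]
  exact Zwedge_le_one T hr x y

lemma pow_le_Zwedge (hTinv : ∀ i, IsUnit (T i)) (hT1 : ∀ i, ‖mCLM (T i)‖ ≤ 1) {r : ℝ}
    (hr : 0 < r) (hr1 : r ≤ 1) (x y : ℕ → Fin m) : r ^ d ≤ Zwedge T x y r := by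
  by_cases h : x = y
  · simpa [h, Zwedge_self] using pow_le_one₀ hr.le hr1
  · rw [Zwedge_of_ne T h]
    exact pow_le_Zmat (isUnit_wordProd T hTinv x _)
      ((norm_mCLM_wordProd_le T hT1 x _).trans (one_pow _).le) hr hr1

lemma mem_cylinder_firstDiff {x y : ℕ → Fin m} : y ∈ cylinder x (firstDiff x y) :=
  fun _ hk => (not_not.mp (Nat.notMem_of_lt_sInf hk)).symm

lemma firstDiff_ne {x y : ℕ → Fin m} (h : x ≠ y) : x (firstDiff x y) ≠ y (firstDiff x y) :=
  Nat.sInf_mem (Function.ne_iff.mp h)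

lemma exists_le_Zword {x : ℕ → Fin m} {n₀ : ℕ} {r : ℝ} (hn₀ : Zword T x n₀ r = 1) (hr : 0 ≤ r)
    (y : ℕ → Fin m) : ∃ n ≤ n₀, y ∈ cylinder x n ∧ Zwedge T x y r ≤ Zword T x n r := by
  by_cases hxy : x = y
  · subst hxy
    exact ⟨n₀, le_rfl, fun _ _ => rfl, by rw [Zwedge_self, hn₀]⟩
  rcases le_total (firstDiff x y) n₀ with h | h
  · exact ⟨_, h, mem_cylinder_firstDiff, (Zwedge_of_ne T hxy r).le⟩
  · exact ⟨n₀, le_rfl, fun k hk => mem_cylinder_firstDiff k (hk.trans_le h),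
      hn₀ ▸ Zwedge_le_one T hr x y⟩

open scoped Classical in
/-- Each `y` is charged to the cylinder `[x|n]`, `n = min(|x ∧ y|, n₀)`; at level `n₀` all the
factors of `Z` are already `1`. -/
lemma sum_Zwedge_le (S : Finset (ℕ → Fin m)) (x : ℕ → Fin m) {n₀ : ℕ} {r K : ℝ}
    (hn₀ : Zword T x n₀ r = 1) (hr : 0 ≤ r)
    (hK : ∀ n, ((S.filter (· ∈ cylinder x n)).card : ℝ) * Zword T x n r ≤ K) :
    ∑ y ∈ S, Zwedge T x y r ≤ (n₀ + 1) * K := by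
  calc ∑ y ∈ S, Zwedge T x y r
      ≤ ∑ y ∈ S, ∑ n ∈ Finset.range (n₀ + 1), if y ∈ cylinder x n then Zword T x n r else 0 := by
        refine Finset.sum_le_sum fun y _ => ?_
        obtain ⟨n, hn, hyn, hle⟩ := exists_le_Zword T hn₀ hr y
        refine hle.trans ?_
        have := Finset.single_le_sum (f := fun n => if y ∈ cylinder x n then Zword T x n r else 0)
          (fun n _ => by split_ifs; exacts [Zmat_nonneg _ hr, le_rfl])
          (Finset.mem_range.2 (Nat.lt_succ_of_le hn))
        simpa [hyn] using this
    _ = ∑ n ∈ Finset.range (n₀ + 1), ((S.filter (· ∈ cylinder x n)).card : ℝ) * Zword T x n r := by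
        rw [Finset.sum_comm]
        simp [Finset.sum_ite]
    _ ≤ ∑ _n ∈ Finset.range (n₀ + 1), K := Finset.sum_le_sum fun n _ => hK n
    _ = (n₀ + 1) * K := by simp

end ZFunction

section Energy

open ProbabilityTheory

lemma integral_uniformOn_finset {α : Type*} [MeasurableSpace α] [MeasurableSingletonClass α]
    (S : Finset α) (f : α → ℝ) :
    ∫ x, f x ∂uniformOn (S : Set α) = (S.card : ℝ)⁻¹ * ∑ x ∈ S, f x := by
  rw [uniformOn, ProbabilityTheory.cond, integral_smul_measure, setIntegral_finset]
  · simp [Measure.count_apply_finset, Finset.mul_sum]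
  · rw [← (S : Set α).biUnion_of_singleton]
    simp [integrableOn_finset_iUnion]

variable {m d : ℕ} (T : Fin m → Matrix (Fin d) (Fin d) ℝ)

lemma measurable_Zword (n : ℕ) (r : ℝ) : Measurable fun x : ℕ → Fin m => Zword T x n r := by
  have h : (fun x : ℕ → Fin m => Zword T x n r) =
      (fun w : Fin n → Fin m => Zmat (List.ofFn fun k => T (w k)).prod r) ∘
        fun x k => x k := by
    funext x
    simp [Zword, wordProd, List.ofFn_eq_map, ← List.map_coe_finRange_eq_range, List.map_map,
      Function.comp_def]
  rw [h]
  exact (measurable_of_countable _).comp (measurable_pi_lambda _ fun k => measurable_pi_apply _)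

lemma measurable_Zwedge (r : ℝ) :
    Measurable fun p : (ℕ → Fin m) × (ℕ → Fin m) => Zwedge T p.1 p.2 r := by
  classical
  -- the disjunct `p.1 = p.2` only makes the search total; on the diagonal the `if` below wins
  have hex : ∀ p : (ℕ → Fin m) × (ℕ → Fin m), ∃ n, p.1 n ≠ p.2 n ∨ p.1 = p.2 := fun p => by
    by_cases h : p.1 = p.2
    · exact ⟨0, Or.inr h⟩
    · exact (Function.ne_iff.mp h).imp fun _ => Or.inl
  have hdiag : MeasurableSet {p : (ℕ → Fin m) × (ℕ → Fin m) | p.1 = p.2} :=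
    measurableSet_eq_fun measurable_fst measurable_snd
  have hZ : (fun p : (ℕ → Fin m) × (ℕ → Fin m) => Zwedge T p.1 p.2 r) =
      fun p => if p.1 = p.2 then 1 else Zword T p.1 (Nat.find (hex p)) r := by
    funext p
    by_cases h : p.1 = p.2
    · simp [h, Zwedge_self]
    · have hfd : firstDiff p.1 p.2 = Nat.find (hex p) :=
        le_antisymm (Nat.sInf_le ((Nat.find_spec (hex p)).resolve_right h))
          (Nat.find_min' _ (Or.inl (firstDiff_ne h)))
      rw [if_neg h, Zwedge_of_ne T h, hfd]
  rw [hZ]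
  refine Measurable.ite hdiag measurable_const
    (Measurable.find (fun n => (measurable_Zword T n r).comp measurable_fst) (fun n => ?_) hex)
  exact (measurableSet_eq_fun ((measurable_pi_apply n).comp measurable_fst)
    ((measurable_pi_apply n).comp measurable_snd)).compl.union hdiag

lemma integrable_Zwedge {r : ℝ} (hr : 0 ≤ r) (μ : Measure (ℕ → Fin m)) [IsFiniteMeasure μ]
    (x : ℕ → Fin m) : Integrable (fun y => Zwedge T x y r) μ :=
  Integrable.of_bound ((measurable_Zwedge T r).comp measurable_prodMk_left).aestronglyMeasurable 1
    (ae_of_all _ (norm_Zwedge_le_one T hr x))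

lemma integrable_integral_Zwedge {r : ℝ} (hr : 0 ≤ r) (μ : Measure (ℕ → Fin m))
    [IsProbabilityMeasure μ] : Integrable (fun x => ∫ y, Zwedge T x y r ∂μ) μ :=
  Integrable.of_bound
    (measurable_Zwedge T r).stronglyMeasurable.integral_prod_right'.aestronglyMeasurable 1
    (ae_of_all _ fun x => by
      simpa only [probReal_univ, mul_one] using
        norm_integral_le_of_norm_le_const (ae_of_all μ (norm_Zwedge_le_one T hr x)))

lemma energy_nonneg {r : ℝ} (hr : 0 ≤ r) (μ : Measure (ℕ → Fin m)) : 0 ≤ energy T μ r :=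
  integral_nonneg fun _ => integral_nonneg fun y => Zwedge_nonneg T hr _ y

lemma pow_le_energy (hTinv : ∀ i, IsUnit (T i)) (hT1 : ∀ i, ‖mCLM (T i)‖ ≤ 1) {r : ℝ}
    (hr : 0 < r) (hr1 : r ≤ 1) (μ : Measure (ℕ → Fin m)) [IsProbabilityMeasure μ] :
    r ^ d ≤ energy T μ r := by
  have hG : ∀ x, r ^ d ≤ ∫ y, Zwedge T x y r ∂μ := fun x => by
    simpa using integral_mono (integrable_const (r ^ d)) (integrable_Zwedge T hr.le μ x)
      (pow_le_Zwedge T hTinv hT1 hr hr1 x)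
  simpa [energy] using
    integral_mono (integrable_const (r ^ d)) (integrable_integral_Zwedge T hr.le μ) hG

lemma capFn_nonneg (E : Set (ℕ → Fin m)) {r : ℝ} (hr : 0 ≤ r) : 0 ≤ capFn T E r :=
  inv_nonneg.2 (Real.sInf_nonneg (by rintro _ ⟨μ, -, -, rfl⟩; exact energy_nonneg T hr μ))

variable (hTinv : ∀ i, IsUnit (T i)) (hT1 : ∀ i, ‖mCLM (T i)‖ ≤ 1) {r : ℝ} (hr : 0 < r)
  (hr1 : r ≤ 1)
include hTinv hT1 hr hr1

lemma inv_energy_le_capFn {E : Set (ℕ → Fin m)} (μ : Measure (ℕ → Fin m))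
    [IsProbabilityMeasure μ] (hμE : μ Eᶜ = 0) : (energy T μ r)⁻¹ ≤ capFn T E r := by
  have hlow : ∀ v ∈ {v : ℝ | ∃ ν : Measure (ℕ → Fin m),
      IsProbabilityMeasure ν ∧ ν Eᶜ = 0 ∧ v = energy T ν r}, r ^ d ≤ v := by
    rintro _ ⟨ν, hν, -, rfl⟩
    exact pow_le_energy T hTinv hT1 hr hr1 ν
  exact inv_anti₀ ((pow_pos hr d).trans_le (le_csInf ⟨_, μ, ‹_›, hμE, rfl⟩ hlow))
    (csInf_le ⟨_, hlow⟩ ⟨μ, ‹_›, hμE, rfl⟩)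

/-- Testing the capacity against the uniform measure on `S`. -/
lemma card_le_mul_capFn {E : Set (ℕ → Fin m)} {S : Finset (ℕ → Fin m)} (hS : S.Nonempty)
    (hSE : ↑S ⊆ E) {K : ℝ} (hK : ∀ x ∈ S, ∑ y ∈ S, Zwedge T x y r ≤ K) :
    (S.card : ℝ) ≤ K * capFn T E r := by
  have := isProbabilityMeasure_uniformOn S.finite_toSet hS
  have hμE : uniformOn (S : Set (ℕ → Fin m)) Eᶜ = 0 :=
    (uniformOn_eq_zero_iff S.finite_toSet).2 (Set.disjoint_compl_right_iff_subset.2 hSE).inter_eq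
  have hN : (0 : ℝ) < S.card := by exact_mod_cast hS.card_pos
  have hpos : 0 < energy T (uniformOn ↑S) r :=
    (pow_pos hr d).trans_le (pow_le_energy T hTinv hT1 hr hr1 _)
  have henergy : S.card * energy T (uniformOn ↑S) r ≤ K := by
    simp only [energy, integral_uniformOn_finset]
    rw [← mul_assoc, mul_inv_cancel₀ hN.ne', one_mul]
    calc ∑ x ∈ S, (S.card : ℝ)⁻¹ * ∑ y ∈ S, Zwedge T x y r ≤ ∑ _x ∈ S, (S.card : ℝ)⁻¹ * K :=
          Finset.sum_le_sum fun x hx => mul_le_mul_of_nonneg_left (hK x hx) (inv_nonneg.2 hN.le)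
      _ = K := by rw [Finset.sum_const, nsmul_eq_mul, ← mul_assoc, mul_inv_cancel₀ hN.ne', one_mul]
  calc (S.card : ℝ) ≤ K * (energy T (uniformOn ↑S) r)⁻¹ := by
        rwa [← div_eq_mul_inv, le_div_iff₀ hpos]
    _ ≤ K * capFn T E r := mul_le_mul_of_nonneg_left (inv_energy_le_capFn T hTinv hT1 hr hr1 _ hμE)
        ((mul_nonneg hN.le hpos.le).trans henergy)

end Energy

lemma exists_finset_subset_injOn_image_eq {α β : Type*} [DecidableEq β] (f : α → β) {E : Set α}
    {t : Finset β} (ht : ↑t ⊆ f '' E) :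
    ∃ S : Finset α, ↑S ⊆ E ∧ Set.InjOn f S ∧ S.image f = t := by
  obtain ⟨s, hsE, hbij⟩ := Set.exists_subset_bijOn (E ∩ f ⁻¹' t) f
  have himage : f '' (E ∩ f ⁻¹' t) = t := by
    rw [Set.image_inter_preimage, Set.inter_eq_right.2 ht]
  have hfin : s.Finite :=
    Set.Finite.of_finite_image (by rw [hbij.image_eq, himage]; exact t.finite_toSet) hbij.injOn
  refine ⟨hfin.toFinset, ?_, ?_, ?_⟩ <;>
    simp only [← Finset.coe_inj, Finset.coe_image, hfin.coe_toFinset]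
  · exact hsE.trans Set.inter_subset_left
  · exact hbij.injOn
  · rw [hbij.image_eq, himage]

section MainEstimate

variable {m d : ℕ} {T : Fin m → Matrix (Fin d) (Fin d) ℝ} {a : Fin m → EuclideanSpace ℝ (Fin d)}
  {α A : ℝ} (hTinv : ∀ i, IsUnit (T i)) (hT : ∀ i, ‖mCLM (T i)‖ ≤ α) (hA : ∀ i, ‖a i‖ ≤ A)
  (hα : α < 1)
include hTinv hT hA hα

open scoped Classical in
lemma card_filter_cylinder_mul_Zword_le {r : ℝ} (hr : 0 < r) {S : Finset (ℕ → Fin m)}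
    (hsep : (S : Set (ℕ → Fin m)).Pairwise fun y z =>
      r / 2 ≤ dist (codingMap T a y) (codingMap T a z))
    (x : ℕ → Fin m) (n : ℕ) :
    ((S.filter (· ∈ cylinder x n)).card : ℝ) * Zword T x n r ≤
      (8 * √(d + 1) * (A / (1 - α)) + 1) ^ d := by
  set S' := S.filter (· ∈ cylinder x n)
  have hinj : Set.InjOn (codingMap T a) S' := fun y hy z hz hyz => by
    by_contra hne
    have : r / 2 ≤ dist (codingMap T a y) (codingMap T a z) :=
      hsep (Finset.filter_subset _ S hy) (Finset.filter_subset _ S hz) hne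
    rw [hyz, dist_self] at this
    linarith
  have hR : 0 ≤ 2 * (A / (1 - α)) :=
    mul_nonneg zero_le_two (div_nonneg ((norm_nonneg _).trans (hA (x 0))) (sub_nonneg.2 hα.le))
  have h := card_mul_Zmat_le (isUnit_wordProd T hTinv x n) (codingMap T a x) hR hr.le
    (half_pos hr) (S'.image (codingMap T a)) (fun p hp => by
      obtain ⟨y, hy, rfl⟩ := Finset.mem_image.mp hp
      exact exists_codingMap_eq_add_wordProd hT hA hα (Finset.mem_filter.mp hy).2)
    (by
      rw [Finset.coe_image]
      rintro _ ⟨y, hy, rfl⟩ _ ⟨z, hz, rfl⟩ hne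
      exact hsep (Finset.filter_subset _ S hy) (Finset.filter_subset _ S hz)
        fun h => hne (h ▸ rfl))
  rwa [Finset.card_image_of_injOn hinj, show 2 * √(d + 1) * (2 * (A / (1 - α))) / (r / 2) * r =
    8 * √(d + 1) * (A / (1 - α)) by field_simp; ring] at h

lemma card_le_mul_capFn_of_pairwise {r : ℝ} (hr : 0 < r) (hr1 : r ≤ 1) {n₀ : ℕ}
    (hn₀ : α ^ n₀ ≤ r) {E : Set (ℕ → Fin m)} {t : Finset (EuclideanSpace ℝ (Fin d))}
    (ht : t.Nonempty) (htE : ↑t ⊆ codingMap T a '' E)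
    (hsep : (t : Set (EuclideanSpace ℝ (Fin d))).Pairwise fun p q => r / 2 ≤ dist p q) :
    (t.card : ℝ) ≤ (n₀ + 1) * (8 * √(d + 1) * (A / (1 - α)) + 1) ^ d * capFn T E r := by
  classical
  obtain ⟨S, hSE, hinj, rfl⟩ := exists_finset_subset_injOn_image_eq (codingMap T a) htE
  have hSsep : (S : Set (ℕ → Fin m)).Pairwise fun y z =>
      r / 2 ≤ dist (codingMap T a y) (codingMap T a z) := fun y hy z hz hyz =>
    hsep (Finset.mem_image_of_mem _ hy) (Finset.mem_image_of_mem _ hz) (hinj.ne hy hz hyz)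
  have hZ : ∀ x, Zword T x n₀ r = 1 := fun x =>
    Zmat_eq_one (isUnit_wordProd T hTinv x n₀) fun k =>
      (sval_le_norm _ k).trans ((norm_mCLM_wordProd_le T hT x n₀).trans hn₀)
  rw [Finset.card_image_of_injOn hinj]
  exact card_le_mul_capFn T hTinv (fun i => (hT i).trans hα.le) hr hr1 (Finset.image_nonempty.mp ht)
    hSE fun x _ => sum_Zwedge_le T S x (hZ x) hr.le
      (card_filter_cylinder_mul_Zword_le hTinv hT hA hα hr hSsep x)

end MainEstimate

lemma exists_pow_le_and_add_one_le_log_div {α r : ℝ} (hr : 0 < r) (hrα : r < α) (hα : α < 1) :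
    ∃ n : ℕ, α ^ n ≤ r ∧ (n : ℝ) + 1 ≤ Real.log r / Real.log α + 2 := by
  have hlogα : Real.log α < 0 := Real.log_neg (hr.trans hrα) hα
  have hL : 0 ≤ Real.log r / Real.log α :=
    div_nonneg_of_nonpos (Real.log_nonpos hr.le (hrα.trans hα).le) hlogα.le
  refine ⟨⌈Real.log r / Real.log α⌉₊, ?_, by linarith [Nat.ceil_lt_add_one hL]⟩
  rw [← Real.log_le_log_iff (pow_pos (hr.trans hrα) _) hr, Real.log_pow]
  calc ⌈Real.log r / Real.log α⌉₊ * Real.log α ≤ Real.log r / Real.log α * Real.log α :=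
        mul_le_mul_of_nonpos_right (Nat.le_ceil _) hlogα.le
    _ = Real.log r := div_mul_cancel₀ _ hlogα.ne

theorem statement17_general (m d : ℕ)
    (T : Fin m → Matrix (Fin d) (Fin d) ℝ)
    (hTinv : ∀ i, IsUnit (T i))
    (hT1 : ∀ i, ‖mCLM (T i)‖ < 1)
    (a : Fin m → EuclideanSpace ℝ (Fin d))
    (αp : ℝ) (hαp : IsGreatest { t : ℝ | ∃ i, t = ‖mCLM (T i)‖ } αp) :
    ∃ C' : ℝ, 0 < C' ∧
      ∀ E : Set (ℕ → Fin m), E.Nonempty → IsCompact E →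
        ∀ r : ℝ, 0 < r → r < αp →
          coverNum (codingMap T a '' E) r
            ≤ ENNReal.ofReal ((Real.log r / Real.log αp + 2) * C' * capFn T E r) := by
  obtain ⟨⟨i₀, hi₀⟩, hmax⟩ := hαp
  have hT : ∀ i, ‖mCLM (T i)‖ ≤ αp := fun i => hmax ⟨i, rfl⟩
  have hα : αp < 1 := hi₀ ▸ hT1 i₀
  have hA : ∀ i, ‖a i‖ ≤ ∑ j, ‖a j‖ := fun i =>
    Finset.single_le_sum (fun j _ => norm_nonneg (a j)) (Finset.mem_univ i)
  have hR : 0 ≤ (∑ j, ‖a j‖) / (1 - αp) :=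
    div_nonneg (Finset.sum_nonneg fun j _ => norm_nonneg _) (sub_nonneg.2 hα.le)
  refine ⟨(8 * √(d + 1) * ((∑ j, ‖a j‖) / (1 - αp)) + 1) ^ d, by positivity,
    fun E _ _ r hr hrα => ?_⟩
  obtain ⟨n₀, hn₀r, hn₀L⟩ := exists_pow_le_and_add_one_le_log_div hr hrα hα
  set X := (Real.log r / Real.log αp + 2) * (8 * √(d + 1) * ((∑ j, ‖a j‖) / (1 - αp)) + 1) ^ d *
    capFn T E r
  have hcap := capFn_nonneg T E hr.le
  have hX : 0 ≤ X := mul_nonneg (mul_nonneg (by linarith) (by positivity)) hcap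
  let ε : ℝ≥0 := ⟨r / 2, by positivity⟩
  have hpacking : packingNumber ε (codingMap T a '' E) ≤ ⌊X⌋₊ := by
    refine packingNumber_le_of_forall_finset fun t htE hsep => ?_
    rcases t.eq_empty_or_nonempty with rfl | ht
    · simp
    refine Nat.le_floor ((card_le_mul_capFn_of_pairwise hTinv hT hA hα hr (hrα.trans hα).le hn₀r
      ht htE hsep).trans ?_)
    exact mul_le_mul_of_nonneg_right (mul_le_mul_of_nonneg_right hn₀L (by positivity)) hcap
  calc coverNum (codingMap T a '' E) r = coverNum (codingMap T a '' E) (2 * ε) := by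
        congr 1
        change r = 2 * (r / 2)
        ring
    _ ≤ coveringNumber ε (codingMap T a '' E) := coverNum_le_coveringNumber _ _
    _ ≤ packingNumber ε (codingMap T a '' E) := by
        exact_mod_cast coveringNumber_le_packingNumber _ _
    _ ≤ (⌊X⌋₊ : ℝ≥0∞) := by exact_mod_cast hpacking
    _ ≤ ENNReal.ofReal X := by
        rw [← ENNReal.ofReal_natCast]
        exact ENNReal.ofReal_le_ofReal (Nat.floor_le hX)

theorem statement17 (m d : ℕ) (hm : 1 ≤ m) (hd : 1 ≤ d)
    (T : Fin m → Matrix (Fin d) (Fin d) ℝ)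
    (hTinv : ∀ i, IsUnit (T i))
    (hT1 : ∀ i, ‖mCLM (T i)‖ < 1)
    (a : Fin m → EuclideanSpace ℝ (Fin d))
    (αp : ℝ) (hαp : IsGreatest { t : ℝ | ∃ i, t = ‖mCLM (T i)‖ } αp) :
    ∃ C' : ℝ, 0 < C' ∧
      ∀ E : Set (ℕ → Fin m), E.Nonempty → IsCompact E →
        ∀ r : ℝ, 0 < r → r < αp →
          coverNum (codingMap T a '' E) r
            ≤ ENNReal.ofReal ((Real.log r / Real.log αp + 2) * C' * capFn T E r) :=
  statement17_general m d T hTinv hT1 a αp hαp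

end SelfAffineProj
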